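/- Let ν ∈ (0,1) and define H_μ(t) := Σ_{k=0}^∞ (t/4)^k/(k! Γ(μ+k+1)) for t ≥ 0. Then H_{−ν}(t)/H_ν(t) → +∞ as t → +∞. Consequently, for every b > 0 the Weyl function of the Bessel operator on (0,b) satisfies M_{ν,b}(x) = −(Γ(1−ν)/(2ν b^{2ν} Γ(1+ν))) H_{−ν}(−b²x)/H_ν(−b²x) → −∞ as x → −∞, so the extension determined by the boundary condition Γ₀ f = 0 is the Friedrichs extension. -/

import Mathlib

/-!
As power series in `t / 4`, the coefficients of `H_{-ν}` and `H_ν` have ratio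
`Γ(k + 1 + ν) / Γ(k + 1 - ν)`, which tends to `∞` by the log-convexity of `Γ`. For power series
with positive coefficients, a coefficient ratio tending to `∞` forces the ratio of the sums to
tend to `∞`, because for large arguments every tail dominates the corresponding finite head.
The Weyl function statement follows by substituting `t = -b²x` and multiplying by a negative
constant.
-/

open MeasureTheory Set Filter

/-- `H_μ(t) = Σ_{k≥0} (t/4)^k/(k! Γ(μ+k+1))`, the entire series with
`I_μ(s) = (s/2)^μ H_μ(s²)`. -/
noncomputable def besselH (μ : ℝ) (t : ℝ) : ℝ :=
  ∑' k : ℕ, (t / 4) ^ k / ((k.factorial : ℝ) * Real.Gamma (μ + k + 1))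

open Real Finset Topology

section PowerSeries

variable {a b : ℕ → ℝ}

lemma summable_mul_pow_of_tendsto_norm_div {c : ℕ → ℝ} (hc : ∀ᶠ n in atTop, c n ≠ 0)
    (hc' : Tendsto (fun n ↦ ‖c (n + 1)‖ / ‖c n‖) atTop (𝓝 0)) (x : ℝ) :
    Summable fun n ↦ c n * x ^ n := by
  have hr := FormalMultilinearSeries.ofScalars_radius_eq_top_of_tendsto ℝ c hc hc'
  have := (FormalMultilinearSeries.ofScalars ℝ c).summable_norm_mul_pow (r := ‖x‖₊) (by simp [hr])
  refine Summable.of_norm ?_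
  simpa [FormalMultilinearSeries.ofScalars_norm] using this

lemma eventually_sum_range_le_tsum_nat_add (hb : ∀ k, 0 ≤ b k) {N : ℕ} (hbN : 0 < b N)
    (hsb : ∀ x, Summable fun k ↦ b k * x ^ k) :
    ∀ᶠ x in atTop, ∑ k ∈ range N, b k * x ^ k ≤ ∑' k, b (k + N) * x ^ (k + N) := by
  set B := ∑ k ∈ range N, b k
  filter_upwards [eventually_ge_atTop 1, eventually_ge_atTop (B / b N)] with x hx1 hxB
  have hx0 : 0 < x := by linarith
  have hhead : x * ∑ k ∈ range N, b k * x ^ k ≤ B * x ^ N := by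
    rw [mul_sum, sum_mul]
    refine sum_le_sum fun k hk ↦ ?_
    have hkN : k + 1 ≤ N := mem_range.mp hk
    calc x * (b k * x ^ k) = b k * x ^ (k + 1) := by ring
      _ ≤ b k * x ^ N := mul_le_mul_of_nonneg_left (pow_le_pow_right₀ hx1 hkN) (hb k)
  have htail : b N * x ^ N ≤ ∑' k, b (k + N) * x ^ (k + N) := by
    simpa using ((summable_nat_add_iff N).mpr (hsb x)).le_tsum 0
      fun k _ ↦ mul_nonneg (hb _) (pow_nonneg hx0.le _)
  have hBx : B ≤ x * b N := (div_le_iff₀ hbN).mp hxB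
  refine le_of_mul_le_mul_left ?_ hx0
  calc x * ∑ k ∈ range N, b k * x ^ k ≤ B * x ^ N := hhead
    _ ≤ x * b N * x ^ N := mul_le_mul_of_nonneg_right hBx (pow_nonneg hx0.le _)
    _ ≤ x * ∑' k, b (k + N) * x ^ (k + N) := by
      rw [mul_assoc]; exact mul_le_mul_of_nonneg_left htail hx0.le

/-- If `a k ≥ 2M b k` from `N` on, then for large `x` the tail from `N` of `∑ b k x ^ k`
carries at least half of its sum, and this tail alone is dominated by `∑ a k x ^ k / (2M)`. -/
theorem tendsto_tsum_mul_pow_div_tsum_mul_pow_atTop (ha : ∀ k, 0 ≤ a k) (hb : ∀ k, 0 < b k)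
    (hsa : ∀ x, Summable fun k ↦ a k * x ^ k) (hsb : ∀ x, Summable fun k ↦ b k * x ^ k)
    (hab : Tendsto (fun k ↦ a k / b k) atTop atTop) :
    Tendsto (fun x ↦ (∑' k, a k * x ^ k) / ∑' k, b k * x ^ k) atTop atTop := by
  refine tendsto_atTop.2 fun M ↦ ?_
  set M' := max M 0
  obtain ⟨N, hN⟩ := eventually_atTop.1 (hab.eventually_ge_atTop (2 * M'))
  filter_upwards [eventually_sum_range_le_tsum_nat_add (fun k ↦ (hb k).le) (hb N) hsb,
    eventually_gt_atTop 0] with x hST hx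
  set S := ∑ k ∈ range N, b k * x ^ k
  set T := ∑' k, b (k + N) * x ^ (k + N)
  have hg : ∑' k, b k * x ^ k = S + T := ((hsb x).sum_add_tsum_nat_add N).symm
  have hg0 : 0 < ∑' k, b k * x ^ k :=
    (hsb x).tsum_pos (fun k ↦ (mul_pos (hb k) (pow_pos hx k)).le) 0 (by simpa using hb 0)
  have hdom : ∀ k, 2 * M' * (b (k + N) * x ^ (k + N)) ≤ a (k + N) * x ^ (k + N) := fun k ↦ by
    have := (le_div_iff₀ (hb (k + N))).mp (hN (k + N) (by omega))
    rw [← mul_assoc]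
    exact mul_le_mul_of_nonneg_right this (pow_nonneg hx.le _)
  have hf : 2 * M' * T ≤ ∑' k, a k * x ^ k :=
    calc 2 * M' * T = ∑' k, 2 * M' * (b (k + N) * x ^ (k + N)) := tsum_mul_left.symm
      _ ≤ ∑' k, a (k + N) * x ^ (k + N) :=
        Summable.tsum_le_tsum hdom (((summable_nat_add_iff N).mpr (hsb x)).mul_left _)
          ((summable_nat_add_iff N).mpr (hsa x))
      _ ≤ ∑' k, a k * x ^ k :=
        tsum_comp_le_tsum_of_inj (hsa x) (fun k ↦ mul_nonneg (ha k) (pow_nonneg hx.le k))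
          (add_left_injective N)
  rw [le_div_iff₀ hg0]
  have hM' : 0 ≤ M' := le_max_right M 0
  calc M * ∑' k, b k * x ^ k ≤ M' * (S + T) :=
        hg ▸ mul_le_mul_of_nonneg_right (le_max_left M 0) hg0.le
    _ ≤ 2 * M' * T := by nlinarith
    _ ≤ _ := hf

end PowerSeries

/-- Log-convexity of `Γ` between `x` and `x + 2`, combined with `Γ (x + 2) = x (x + 1) Γ x`. -/
lemma rpow_mul_Gamma_add_two_sub_le_Gamma_add_two {x t : ℝ} (hx : 0 < x) (ht₀ : 0 < t)
    (ht₁ : t < 1) : (x * (x + 1)) ^ t * Gamma (x + 2 - 2 * t) ≤ Gamma (x + 2) := by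
  have hxx : 0 < x * (x + 1) := by positivity
  have hG : 0 < Gamma x := Gamma_pos_of_pos hx
  have hrec : Gamma (x + 2) = x * (x + 1) * Gamma x := by
    rw [show x + 2 = x + 1 + 1 by ring, Gamma_add_one (by positivity), Gamma_add_one hx.ne']
    ring
  have hconv := Gamma_mul_add_mul_le_rpow_Gamma_mul_rpow_Gamma (by positivity : 0 < x + 2) hx
    (sub_pos.mpr ht₁) ht₀ (sub_add_cancel 1 t)
  rw [show (1 - t) * (x + 2) + t * x = x + 2 - 2 * t by ring] at hconv
  calc (x * (x + 1)) ^ t * Gamma (x + 2 - 2 * t)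
      ≤ (x * (x + 1)) ^ t * (Gamma (x + 2) ^ (1 - t) * Gamma x ^ t) :=
        mul_le_mul_of_nonneg_left hconv (rpow_nonneg hxx.le t)
    _ = Gamma (x + 2) ^ (1 - t) * Gamma (x + 2) ^ t := by
        rw [mul_left_comm, ← mul_rpow hxx.le hG.le, ← hrec]
    _ = Gamma (x + 2) := by
        rw [← rpow_add (Gamma_pos_of_pos (by positivity)), sub_add_cancel, rpow_one]

lemma tendsto_Gamma_add_div_Gamma_neg_add_atTop {ν : ℝ} (hν₀ : 0 < ν) (hν₁ : ν < 1) :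
    Tendsto (fun k : ℕ ↦ Gamma (ν + k + 1) / Gamma (-ν + k + 1)) atTop atTop := by
  have hshift : Tendsto (fun k : ℕ ↦ (k : ℝ) + (ν - 1)) atTop atTop :=
    tendsto_atTop_add_const_right _ _ tendsto_natCast_atTop_atTop
  have hlower : Tendsto (fun y : ℝ ↦ (y * (y + 1)) ^ ν) atTop atTop :=
    (tendsto_rpow_atTop hν₀).comp
      (tendsto_id.atTop_mul_atTop₀ (tendsto_atTop_add_const_right _ 1 tendsto_id))
  refine tendsto_atTop_mono' _ ?_ (hlower.comp hshift)
  filter_upwards [eventually_ge_atTop 1] with k hk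
  have hk' : (1 : ℝ) ≤ k := by exact_mod_cast hk
  have hx : 0 < (k : ℝ) + (ν - 1) := by linarith
  have key := rpow_mul_Gamma_add_two_sub_le_Gamma_add_two hx hν₀ hν₁
  rw [show (k : ℝ) + (ν - 1) + 2 - 2 * ν = -ν + k + 1 by ring,
    show (k : ℝ) + (ν - 1) + 2 = ν + k + 1 by ring] at key
  exact (le_div_iff₀ (Gamma_pos_of_pos (by linarith))).mpr key

noncomputable def besselCoeff (μ : ℝ) (k : ℕ) : ℝ := ((k.factorial : ℝ) * Gamma (μ + k + 1))⁻¹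

lemma besselH_eq_tsum (μ t : ℝ) : besselH μ t = ∑' k, besselCoeff μ k * (t / 4) ^ k :=
  tsum_congr fun _ ↦ div_eq_inv_mul _ _

lemma besselCoeff_pos {μ : ℝ} (hμ : -1 < μ) (k : ℕ) : 0 < besselCoeff μ k := by
  have : 0 < μ + k + 1 := by have := k.cast_nonneg (α := ℝ); linarith
  unfold besselCoeff
  have := Gamma_pos_of_pos this
  positivity

lemma besselCoeff_succ_div {μ : ℝ} (hμ : -1 < μ) (k : ℕ) :
    besselCoeff μ (k + 1) / besselCoeff μ k = ((k + 1) * (μ + k + 1))⁻¹ := by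
  have hpos : 0 < μ + k + 1 := by have := k.cast_nonneg (α := ℝ); linarith
  have hG : Gamma (μ + (k + 1 : ℕ) + 1) = (μ + k + 1) * Gamma (μ + k + 1) := by
    push_cast
    rw [show μ + (k + 1) + 1 = μ + k + 1 + 1 by ring, Gamma_add_one hpos.ne']
  have := (Gamma_pos_of_pos hpos).ne'
  simp only [besselCoeff, hG, Nat.factorial_succ]
  push_cast
  field_simp

lemma summable_besselCoeff_mul_pow {μ : ℝ} (hμ : -1 < μ) (x : ℝ) :
    Summable fun k ↦ besselCoeff μ k * x ^ k := by
  refine summable_mul_pow_of_tendsto_norm_div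
    (Eventually.of_forall fun k ↦ (besselCoeff_pos hμ k).ne') ?_ x
  have hden : Tendsto (fun k : ℕ ↦ ((k : ℝ) + 1) * (μ + k + 1)) atTop atTop :=
    (tendsto_atTop_add_const_right _ 1 tendsto_natCast_atTop_atTop).atTop_mul_atTop₀
      ((tendsto_atTop_add_const_left _ (μ + 1) tendsto_natCast_atTop_atTop).congr
        fun k ↦ by ring)
  refine (tendsto_inv_atTop_zero.comp hden).congr fun k ↦ ?_
  rw [Real.norm_of_nonneg (besselCoeff_pos hμ _).le, Real.norm_of_nonneg (besselCoeff_pos hμ _).le,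
    besselCoeff_succ_div hμ]
  rfl

lemma besselCoeff_div_besselCoeff (μ μ' : ℝ) (k : ℕ) :
    besselCoeff μ k / besselCoeff μ' k = Gamma (μ' + k + 1) / Gamma (μ + k + 1) := by
  rw [besselCoeff, besselCoeff, inv_div_inv, mul_div_mul_left _ _ (by positivity)]

theorem tendsto_besselH_neg_div_besselH_atTop {ν : ℝ} (hν₀ : 0 < ν) (hν₁ : ν < 1) :
    Tendsto (fun t ↦ besselH (-ν) t / besselH ν t) atTop atTop := by
  have hratio := tendsto_tsum_mul_pow_div_tsum_mul_pow_atTop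
    (fun k ↦ (besselCoeff_pos (by linarith : -1 < -ν) k).le)
    (besselCoeff_pos (by linarith : -1 < ν))
    (summable_besselCoeff_mul_pow (by linarith)) (summable_besselCoeff_mul_pow (by linarith))
    ((tendsto_Gamma_add_div_Gamma_neg_add_atTop hν₀ hν₁).congr fun k ↦
      (besselCoeff_div_besselCoeff _ _ k).symm)
  have hquarter : Tendsto (fun t : ℝ ↦ t / 4) atTop atTop :=
    tendsto_id.atTop_div_const (by norm_num)
  exact (hratio.comp hquarter).congr fun t ↦ by simp only [Function.comp_apply, besselH_eq_tsum]

/-- For `ν ∈ (0,1)`, `H_{−ν}(t)/H_ν(t) → +∞` as `t → +∞`; consequently, for every `b > 0`,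
the Weyl function `M_{ν,b}(x) = −(Γ(1−ν)/(2ν b^{2ν} Γ(1+ν))) H_{−ν}(−b²x)/H_ν(−b²x)`
tends to `−∞` as `x → −∞`, so the extension with boundary condition `Γ₀f = 0` is the
Friedrichs extension. -/
theorem stmt13 (ν : ℝ) (hν : ν ∈ Ioo (0:ℝ) 1) :
    Tendsto (fun t : ℝ => besselH (-ν) t / besselH ν t) atTop atTop ∧
    ∀ b : ℝ, 0 < b →
      Tendsto
        (fun x : ℝ =>
          -(Real.Gamma (1 - ν) / (2 * ν * b ^ (2 * ν) * Real.Gamma (1 + ν)))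
            * (besselH (-ν) (-(b ^ 2) * x) / besselH ν (-(b ^ 2) * x)))
        atBot atBot := by
  obtain ⟨hν₀, hν₁⟩ := hν
  have hratio := tendsto_besselH_neg_div_besselH_atTop hν₀ hν₁
  refine ⟨hratio, fun b hb ↦ ?_⟩
  have hconst : 0 < Gamma (1 - ν) / (2 * ν * b ^ (2 * ν) * Gamma (1 + ν)) := by
    have := Gamma_pos_of_pos (by linarith : 0 < 1 - ν)
    have := Gamma_pos_of_pos (by linarith : 0 < 1 + ν)
    have := rpow_pos_of_pos hb (2 * ν)
    positivity
  have hscale : Tendsto (fun x : ℝ ↦ -(b ^ 2) * x) atBot atTop :=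
    tendsto_id.const_mul_atBot_of_neg (by nlinarith)
  exact (hratio.comp hscale).const_mul_atTop_of_neg (neg_neg_iff_pos.mpr hconst)
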